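/- arXiv:2401.13966 — 4 statements merged into one kernel-verified Lean document; each statement's English description precedes it below -/
import Mathlib

section
/- Let u be a unit vector in ℝ^{m+1} and let f : ℝ^{m+1} → ℝ be a 1-Lipschitz function such that f(s•u) = s for all real s. Then f(v) = ⟪v, u⟫ for all v ∈ ℝ^{m+1}. -/
/-!
Comparing `f v` with `f (s • u) = s` gives `(f v - s)² ≤ ‖v - s • u‖²` for every real `s`.
The `s²` terms cancel, so `2 s (⟪v, u⟫ - f v)` is bounded above independently of `s`,
which forces the slope `⟪v, u⟫ - f v` to vanish.
-/

open scoped RealInnerProductSpace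

theorem eq_zero_of_forall_mul_le {a b : ℝ} (h : ∀ s : ℝ, s * a ≤ b) : a = 0 := by
  by_contra ha
  have := h ((b + 1) / a)
  rw [div_mul_cancel₀ _ ha] at this
  linarith

section InnerProductSpace

variable {E : Type*} [NormedAddCommGroup E] [InnerProductSpace ℝ E]

theorem LipschitzWith.mul_inner_sub_le {u : E} (hu : ‖u‖ = 1) {f : E → ℝ}
    (hf : LipschitzWith 1 f) (hline : ∀ s : ℝ, f (s • u) = s) (v : E) (s : ℝ) :
    s * (2 * (⟪v, u⟫ - f v)) ≤ ‖v‖ ^ 2 - f v ^ 2 := by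
  have hdist : |f v - s| ≤ ‖v - s • u‖ := by
    simpa [hline s, Real.dist_eq, dist_eq_norm] using hf.dist_le_mul v (s • u)
  have hsq : (f v - s) ^ 2 ≤ ‖v - s • u‖ ^ 2 := sq_le_sq' (abs_le.mp hdist).1 (abs_le.mp hdist).2
  have hexpand : ‖v - s • u‖ ^ 2 = ‖v‖ ^ 2 - 2 * (s * ⟪v, u⟫) + s ^ 2 := by
    rw [norm_sub_sq_real, real_inner_smul_right, norm_smul, Real.norm_eq_abs, hu, mul_one, sq_abs]
  nlinarith

theorem LipschitzWith.eq_inner_of_apply_smul_eq {u : E} (hu : ‖u‖ = 1) {f : E → ℝ}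
    (hf : LipschitzWith 1 f) (hline : ∀ s : ℝ, f (s • u) = s) (v : E) : f v = ⟪v, u⟫ := by
  have := eq_zero_of_forall_mul_le (hf.mul_inner_sub_le hu hline v)
  linarith

end InnerProductSpace

theorem stmt0 {m : ℕ} (u : EuclideanSpace ℝ (Fin (m + 1))) (hu : ‖u‖ = 1)
    (f : EuclideanSpace ℝ (Fin (m + 1)) → ℝ) (hf : LipschitzWith 1 f)
    (hline : ∀ s : ℝ, f (s • u) = s) :
    ∀ v : EuclideanSpace ℝ (Fin (m + 1)), f v = ⟪v, u⟫ :=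
  hf.eq_inner_of_apply_smul_eq hu hline
end

section
/- Let u be a unit vector in ℝ^n and f : ℝ^n → ℝ a 1-Lipschitz function with f(s•u) = s for all s ∈ ℝ. Then f(v) ≤ ⟪v, u⟫ for every v; equivalently, f is bounded above by the linear function v ↦ ⟪v,u⟫ on every half-space {v : ⟪v,u⟫ ≤ s} by the value s. -/
open scoped RealInnerProductSpace
open Filter Topology

/-!
Compare `v` with the point `p = (⟪v, u⟫ - r) • u` of the line: `f p = ⟪v, u⟫ - r`, and
`‖v - p‖² = ‖v‖² - ⟪v, u⟫² + r²`, so `‖v - p‖ ≤ r + ‖v‖² / (2r)`. The Lipschitz bound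
therefore gives `f v ≤ ⟪v, u⟫ + ‖v‖² / (2r)`, and we let `r → ∞`.
-/

section

variable {E : Type*} [NormedAddCommGroup E] [InnerProductSpace ℝ E]

theorem norm_sub_smul_inner_sub_le {u : E} (hu : ‖u‖ = 1) (v : E) {r : ℝ} (hr : 0 < r) :
    ‖v - (⟪v, u⟫ - r) • u‖ ≤ r + ‖v‖ ^ 2 / (2 * r) := by
  have hbound : 0 ≤ r + ‖v‖ ^ 2 / (2 * r) := by positivity
  rw [← pow_le_pow_iff_left₀ (norm_nonneg _) hbound two_ne_zero]
  have hsq : ‖v - (⟪v, u⟫ - r) • u‖ ^ 2 = ‖v‖ ^ 2 - ⟪v, u⟫ ^ 2 + r ^ 2 := by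
    rw [norm_sub_sq_real, real_inner_smul_right, norm_smul, hu, Real.norm_eq_abs, mul_one,
      sq_abs]
    ring
  calc ‖v - (⟪v, u⟫ - r) • u‖ ^ 2 ≤ ‖v‖ ^ 2 + r ^ 2 := by rw [hsq]; linarith [sq_nonneg ⟪v, u⟫]
    _ ≤ (r + ‖v‖ ^ 2 / (2 * r)) ^ 2 := by
      have hexpand :
          (r + ‖v‖ ^ 2 / (2 * r)) ^ 2 = r ^ 2 + ‖v‖ ^ 2 + (‖v‖ ^ 2 / (2 * r)) ^ 2 := by
        field_simp
        ring
      rw [hexpand]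
      linarith [sq_nonneg (‖v‖ ^ 2 / (2 * r))]

theorem le_inner_of_lipschitzWith_one_of_apply_smul {u : E} (hu : ‖u‖ = 1) {f : E → ℝ}
    (hf : LipschitzWith 1 f) (hline : ∀ s : ℝ, f (s • u) = s) (v : E) : f v ≤ ⟪v, u⟫ := by
  have hbound : ∀ r > 0, f v ≤ ⟪v, u⟫ + ‖v‖ ^ 2 / (2 * r) := fun r hr =>
    calc f v ≤ f ((⟪v, u⟫ - r) • u) + 1 * dist v ((⟪v, u⟫ - r) • u) := hf.le_add_mul _ _
      _ = ⟪v, u⟫ - r + ‖v - (⟪v, u⟫ - r) • u‖ := by rw [hline, one_mul, dist_eq_norm]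
      _ ≤ ⟪v, u⟫ + ‖v‖ ^ 2 / (2 * r) := by linarith [norm_sub_smul_inner_sub_le hu v hr]
  have hlim : Tendsto (fun r : ℝ => ⟪v, u⟫ + ‖v‖ ^ 2 / (2 * r)) atTop (𝓝 ⟪v, u⟫) := by
    simpa using tendsto_const_nhds.add
      (tendsto_const_nhds.div_atTop (tendsto_id.const_mul_atTop (two_pos : (0 : ℝ) < 2)))
  exact ge_of_tendsto hlim (eventually_gt_atTop 0 |>.mono hbound)

end

theorem stmt1 {n : ℕ} (u : EuclideanSpace ℝ (Fin n)) (hu : ‖u‖ = 1)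
    (f : EuclideanSpace ℝ (Fin n) → ℝ) (hf : LipschitzWith 1 f)
    (hline : ∀ s : ℝ, f (s • u) = s) :
    ∀ v : EuclideanSpace ℝ (Fin n), f v ≤ ⟪v, u⟫ :=
  le_inner_of_lipschitzWith_one_of_apply_smul hu hf hline
end

section
/- For every ε > 0 and σ > 0 there exists δ > 0 with the following property in ℝ^n: if u and v are unit vectors, p, q ∈ ℝ^n with ‖p − q‖ ≤ δ, and a, b ≥ σ satisfy ‖(p − a u) − (q + b v)‖ ≥ a + b − δ, then ‖u − v‖ < ε. -/
/-! If the far endpoints are almost `a + b` apart, then so is `a • u + b • v` from `0`. For unit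
vectors `‖a • u + b • v‖² = (a + b)² - a b ‖u - v‖²`, so the deficit `a b ‖u - v‖²` is at most
`4 δ (a + b)`; since `a, b ≥ σ` this bounds `‖u - v‖²` by `8 δ / σ`. -/

section

variable {E : Type*} [NormedAddCommGroup E] [InnerProductSpace ℝ E]

theorem norm_smul_add_smul_sq_of_norm_eq_one {u v : E} (hu : ‖u‖ = 1) (hv : ‖v‖ = 1) (a b : ℝ) :
    ‖a • u + b • v‖ ^ 2 = (a + b) ^ 2 - a * b * ‖u - v‖ ^ 2 := by
  rw [norm_add_sq_real, norm_sub_sq_real, norm_smul, norm_smul, real_inner_smul_left,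
    real_inner_smul_right, hu, hv, Real.norm_eq_abs, Real.norm_eq_abs, mul_pow, mul_pow, sq_abs,
    sq_abs]
  ring

theorem sub_two_mul_le_norm_smul_add_smul {u v p q : E} {a b δ : ℝ} (hpq : ‖p - q‖ ≤ δ)
    (hfar : a + b - δ ≤ ‖(p - a • u) - (q + b • v)‖) : a + b - 2 * δ ≤ ‖a • u + b • v‖ := by
  have htri := norm_sub_le (p - q) (a • u + b • v)
  rw [show (p - q) - (a • u + b • v) = (p - a • u) - (q + b • v) by abel] at htri
  linarith

theorem mul_mul_norm_sub_sq_le {u v : E} (hu : ‖u‖ = 1) (hv : ‖v‖ = 1) {a b δ : ℝ}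
    (hδ : 2 * δ ≤ a + b) (h : a + b - 2 * δ ≤ ‖a • u + b • v‖) :
    a * b * ‖u - v‖ ^ 2 ≤ 4 * δ * (a + b) := by
  have hsq : (a + b - 2 * δ) ^ 2 ≤ ‖a • u + b • v‖ ^ 2 :=
    pow_le_pow_left₀ (sub_nonneg.2 hδ) h 2
  rw [norm_smul_add_smul_sq_of_norm_eq_one hu hv] at hsq
  nlinarith [sq_nonneg δ]

end

theorem mul_le_of_mul_mul_le {σ a b x δ : ℝ} (hσ : 0 < σ) (ha : σ ≤ a) (hb : σ ≤ b) (hx : 0 ≤ x)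
    (h : a * b * x ≤ 4 * δ * (a + b)) : σ * x ≤ 8 * δ := by
  have hab : σ * (a + b) ≤ 2 * (a * b) := by nlinarith
  have hσab : σ * x * (a + b) ≤ 8 * δ * (a + b) := by nlinarith [mul_le_mul_of_nonneg_right hab hx]
  exact le_of_mul_le_mul_right hσab (by linarith)

theorem stmt8 {n : ℕ} (ε σ : ℝ) (hε : 0 < ε) (hσ : 0 < σ) :
    ∃ δ > 0, ∀ (u v p q : EuclideanSpace ℝ (Fin n)) (a b : ℝ),
      ‖u‖ = 1 → ‖v‖ = 1 → ‖p - q‖ ≤ δ → σ ≤ a → σ ≤ b →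
      ‖(p - a • u) - (q + b • v)‖ ≥ a + b - δ → ‖u - v‖ < ε := by
  refine ⟨min σ (σ * ε ^ 2 / 16), lt_min hσ (by positivity), ?_⟩
  intro u v p q a b hu hv hpq ha hb hfar
  have hδσ := min_le_left σ (σ * ε ^ 2 / 16)
  have hδε := min_le_right σ (σ * ε ^ 2 / 16)
  have hdeficit := mul_mul_norm_sub_sq_le hu hv (by linarith)
    (sub_two_mul_le_norm_smul_add_smul hpq hfar)
  have hσuv := mul_le_of_mul_mul_le hσ ha hb (sq_nonneg _) hdeficit
  have huv : ‖u - v‖ ^ 2 < ε ^ 2 := by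
    have : ‖u - v‖ ^ 2 ≤ ε ^ 2 / 2 := le_of_mul_le_mul_left (by linarith) hσ
    linarith [pow_pos hε 2]
  exact lt_of_pow_lt_pow_left₀ 2 hε.le huv
end

section
/- Let X, Y ⊆ ℝ^n be closed nonempty sets with d(X, Y) = 2R > 0, and let S = {p : d(p, X) = d(p, Y) = R}. Then for each p ∈ S there is exactly one unit vector u with p − R·u ∈ X, this u is also the unique unit vector with p + R·u ∈ Y, and the map p ∈ S ↦ u(p) is continuous. -/
/-!
If `p - R • u ∈ X` and `p + R • v ∈ Y` for unit vectors `u`, `v`, the segments `R • u` and `R • v`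
have total length `2R`, while their sum is the difference of a point of `Y` and a point of `X`,
of norm at least `2R`; strict convexity forces `R • u = R • v`. This gives both uniqueness
statements, and existence follows by taking nearest points of `X` and `Y`. For continuity, the
same separation applied to `p + R • U p ∈ Y` and `q - R • U q ∈ X`, combined with the
parallelogram law, yields the Hölder estimate `‖U p - U q‖ ^ 2 ≤ 4 / R * dist p q`.
-/

open Filter Metric Topology

/-- The distance between two sets: `inf {dist a b : a ∈ A, b ∈ B}`. -/
noncomputable def setDist {N : Type*} [MetricSpace N] (A B : Set N) : ℝ :=
  sInf (Set.image2 dist A B)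

theorem setDist_le_dist {N : Type*} [MetricSpace N] {A B : Set N} {a b : N}
    (ha : a ∈ A) (hb : b ∈ B) : setDist A B ≤ dist a b :=
  csInf_le ⟨0, by rintro _ ⟨a, -, b, -, rfl⟩; exact dist_nonneg⟩ (Set.mem_image2_of_mem ha hb)

theorem continuousOn_of_dist_sq_le {α β : Type*} [PseudoMetricSpace α] [PseudoMetricSpace β]
    {f : α → β} {s : Set α} {C : ℝ}
    (h : ∀ x ∈ s, ∀ y ∈ s, dist (f x) (f y) ^ 2 ≤ C * dist x y) : ContinuousOn f s := by
  intro x hx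
  rw [ContinuousWithinAt, tendsto_iff_dist_tendsto_zero]
  have hlim : Tendsto (fun y => √(C * dist y x)) (𝓝[s] x) (𝓝 0) := by
    have : Tendsto (fun y => √(C * dist y x)) (𝓝 x) (𝓝 √(C * dist x x)) :=
      ((continuous_id.dist continuous_const).const_mul C).sqrt.tendsto x
    simpa using this.mono_left nhdsWithin_le_nhds
  refine squeeze_zero' (Eventually.of_forall fun _ => dist_nonneg) ?_ hlim
  filter_upwards [self_mem_nhdsWithin] with y hy
  exact Real.le_sqrt_of_sq_le (h y hy x hx)

section NormedSpace

variable {E : Type*} [NormedAddCommGroup E] [NormedSpace ℝ E] {X Y : Set E} {R : ℝ}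

theorem eq_of_sub_smul_mem_of_add_smul_mem [StrictConvexSpace ℝ E]
    (hsep : ∀ x ∈ X, ∀ y ∈ Y, 2 * R ≤ dist x y) (hR : 0 < R) {p u v : E}
    (hu : ‖u‖ = 1) (hv : ‖v‖ = 1) (hx : p - R • u ∈ X) (hy : p + R • v ∈ Y) : u = v := by
  have hRu : ‖R • u‖ = R := by rw [norm_smul, hu, Real.norm_of_nonneg hR.le, mul_one]
  have hRv : ‖R • v‖ = R := by rw [norm_smul, hv, Real.norm_of_nonneg hR.le, mul_one]
  have hadd : ‖R • u + R • v‖ = ‖R • u‖ + ‖R • v‖ := by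
    refine le_antisymm (norm_add_le _ _) ?_
    calc ‖R • u‖ + ‖R • v‖ = 2 * R := by rw [hRu, hRv]; ring
      _ ≤ dist (p - R • u) (p + R • v) := hsep _ hx _ hy
      _ = ‖R • u + R • v‖ := by rw [dist_eq_norm, ← norm_neg]; congr 1; abel
  exact smul_right_injective E hR.ne' (eq_of_norm_eq_of_norm_add_eq (hRu.trans hRv.symm) hadd)

theorem exists_norm_eq_one_sub_smul_mem [ProperSpace E] (hX : IsClosed X) (hne : X.Nonempty)
    (hR : 0 < R) {p : E} (hp : infDist p X = R) : ∃ u : E, ‖u‖ = 1 ∧ p - R • u ∈ X := by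
  obtain ⟨x, hx, hpx⟩ := hX.exists_infDist_eq_dist hne p
  refine ⟨R⁻¹ • (p - x), ?_, ?_⟩
  · rw [norm_smul, ← dist_eq_norm, ← hpx, hp, Real.norm_of_nonneg (inv_nonneg.2 hR.le),
      inv_mul_cancel₀ hR.ne']
  · rwa [smul_inv_smul₀ hR.ne', sub_sub_cancel]

theorem exists_norm_eq_one_sub_smul_mem_and_add_smul_mem [StrictConvexSpace ℝ E] [ProperSpace E]
    (hXc : IsClosed X) (hYc : IsClosed Y) (hXne : X.Nonempty) (hYne : Y.Nonempty)
    (hsep : ∀ x ∈ X, ∀ y ∈ Y, 2 * R ≤ dist x y) (hR : 0 < R) {p : E}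
    (hpX : infDist p X = R) (hpY : infDist p Y = R) :
    ∃ u : E, ‖u‖ = 1 ∧ p - R • u ∈ X ∧ p + R • u ∈ Y := by
  obtain ⟨u, hu, hux⟩ := exists_norm_eq_one_sub_smul_mem hXc hXne hR hpX
  obtain ⟨v, hv, hvy⟩ := exists_norm_eq_one_sub_smul_mem hYc hYne hR hpY
  rw [sub_eq_add_neg, ← smul_neg] at hvy
  refine ⟨u, hu, hux, ?_⟩
  rwa [eq_of_sub_smul_mem_of_add_smul_mem hsep hR hu (by rwa [norm_neg]) hux hvy]

end NormedSpace

theorem dist_sq_le_of_add_smul_mem_of_sub_smul_mem {E : Type*} [NormedAddCommGroup E]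
    [InnerProductSpace ℝ E] {X Y : Set E} {R : ℝ}
    (hsep : ∀ x ∈ X, ∀ y ∈ Y, 2 * R ≤ dist x y) (hR : 0 < R) {p q u v : E}
    (hu : ‖u‖ = 1) (hv : ‖v‖ = 1) (hy : p + R • u ∈ Y) (hx : q - R • v ∈ X) :
    dist u v ^ 2 ≤ 4 / R * dist p q := by
  have hsum : 2 * R ≤ dist p q + R * ‖u + v‖ :=
    calc 2 * R ≤ dist (q - R • v) (p + R • u) := hsep _ hx _ hy
      _ = ‖(q - p) - R • (u + v)‖ := by rw [dist_eq_norm, smul_add]; congr 1; abel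
      _ ≤ ‖q - p‖ + ‖R • (u + v)‖ := norm_sub_le _ _
      _ = dist p q + R * ‖u + v‖ := by rw [← dist_eq_norm', norm_smul, Real.norm_of_nonneg hR.le]
  have hpar : ‖u + v‖ ^ 2 + ‖u - v‖ ^ 2 = 4 := by
    rw [norm_add_sq_real, norm_sub_sq_real, hu, hv]; ring
  have hle : ‖u + v‖ ≤ 2 := (norm_add_le u v).trans (by rw [hu, hv]; norm_num)
  rw [div_mul_eq_mul_div, le_div_iff₀ hR, dist_eq_norm]
  calc ‖u - v‖ ^ 2 * R = R * (2 - ‖u + v‖) * (2 + ‖u + v‖) := by linear_combination R * hpar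
    _ ≤ dist p q * (2 + ‖u + v‖) := by gcongr; linarith
    _ ≤ dist p q * 4 := by gcongr; linarith
    _ = 4 * dist p q := mul_comm _ _

theorem stmt14 {n : ℕ} (X Y : Set (EuclideanSpace ℝ (Fin n)))
    (hXc : IsClosed X) (hYc : IsClosed Y) (hXne : X.Nonempty) (hYne : Y.Nonempty)
    (R : ℝ) (hR : 0 < R) (hXY : setDist X Y = 2 * R) :
    ∃ U : EuclideanSpace ℝ (Fin n) → EuclideanSpace ℝ (Fin n),
      ContinuousOn U {p | Metric.infDist p X = R ∧ Metric.infDist p Y = R} ∧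
      ∀ p ∈ {p : EuclideanSpace ℝ (Fin n) |
          Metric.infDist p X = R ∧ Metric.infDist p Y = R},
        ‖U p‖ = 1 ∧ p - R • U p ∈ X ∧ p + R • U p ∈ Y ∧
        (∀ u : EuclideanSpace ℝ (Fin n), ‖u‖ = 1 → p - R • u ∈ X → u = U p) ∧
        (∀ u : EuclideanSpace ℝ (Fin n), ‖u‖ = 1 → p + R • u ∈ Y → u = U p) := by
  have hsep : ∀ x ∈ X, ∀ y ∈ Y, 2 * R ≤ dist x y := fun x hx y hy =>
    hXY ▸ setDist_le_dist hx hy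
  choose! U hU hUX hUY using fun p (hp : infDist p X = R ∧ infDist p Y = R) =>
    exists_norm_eq_one_sub_smul_mem_and_add_smul_mem hXc hYc hXne hYne hsep hR hp.1 hp.2
  refine ⟨U, ?_, fun p hp => ⟨hU p hp, hUX p hp, hUY p hp, ?_, ?_⟩⟩
  · exact continuousOn_of_dist_sq_le fun p hp q hq =>
      dist_sq_le_of_add_smul_mem_of_sub_smul_mem hsep hR (hU p hp) (hU q hq) (hUY p hp) (hUX q hq)
  · exact fun u hu hux => eq_of_sub_smul_mem_of_add_smul_mem hsep hR hu (hU p hp) hux (hUY p hp)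
  · exact fun u hu huy =>
      (eq_of_sub_smul_mem_of_add_smul_mem hsep hR (hU p hp) hu (hUX p hp) huy).symm
end
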